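/- arXiv:2604.07647 — 3 statements merged into one kernel-verified Lean document; each statement's English description precedes it below -/
import Mathlib

section
/- The function i ↦ ((n+2)/(n+1)) * C(n+1,i) C(n+1,i+1) / C(2n+2,n+1), for i = 0,1,...,n, is a probability mass function; that is, the values are nonnegative and sum to 1. -/
lemma narayana_key (n : ℕ) :
    ∑ i ∈ Finset.range (n + 1), (n + 1).choose i * (n + 1).choose (i + 1) =
      (2 * n + 2).choose n := by
  have h2 : 2 * n + 2 = (n + 1) + (n + 1) := by ring
  rw [h2, Nat.add_choose_eq, Finset.Nat.sum_antidiagonal_eq_sum_range_succ_mk]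
  apply Finset.sum_congr rfl
  intro i hi
  simp only [Finset.mem_range] at hi
  congr 1
  rw [← Nat.choose_symm (by omega : i + 1 ≤ n + 1)]
  congr 1
  omega

theorem narayana_pmf (n : ℕ) :
    (∀ i ∈ Finset.range (n + 1),
        0 ≤ ((n + 2 : ℝ) / (n + 1)) *
          (Nat.choose (n + 1) i * Nat.choose (n + 1) (i + 1) : ℝ) /
          (Nat.choose (2 * n + 2) (n + 1) : ℝ)) ∧
    ∑ i ∈ Finset.range (n + 1),
        ((n + 2 : ℝ) / (n + 1)) *
          (Nat.choose (n + 1) i * Nat.choose (n + 1) (i + 1) : ℝ) /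
          (Nat.choose (2 * n + 2) (n + 1) : ℝ) = 1 := by
  constructor
  · intro i _
    positivity
  · have hsum : ∑ i ∈ Finset.range (n + 1),
        ((Nat.choose (n + 1) i * Nat.choose (n + 1) (i + 1) : ℕ) : ℝ) =
        ((2 * n + 2).choose n : ℝ) := by
      rw [← Nat.cast_sum]
      exact_mod_cast congrArg (Nat.cast : ℕ → ℝ) (narayana_key n)
    have hc : (2 * n + 2).choose (n + 1) * (n + 1) = (2 * n + 2).choose n * (n + 2) := by
      have h := Nat.choose_succ_right_eq (2 * n + 2) n
      simpa [show 2 * n + 2 - n = n + 2 by omega] using h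
    have hpos : (0 : ℝ) < ((2 * n + 2).choose (n + 1) : ℝ) := by
      exact_mod_cast Nat.choose_pos (by omega)
    have hn1 : ((n : ℝ) + 1) ≠ 0 := by positivity
    rw [← Finset.sum_div, ← Finset.mul_sum]
    push_cast at hsum ⊢
    rw [hsum]
    rw [div_eq_one_iff_eq hpos.ne']
    have hcR : ((2 * n + 2).choose (n + 1) : ℝ) * (n + 1) =
        ((2 * n + 2).choose n : ℝ) * (n + 2) := by exact_mod_cast hc
    field_simp
    linarith [hcR]
end

section
/- Let W_0, ..., W_n be real numbers with (W_0+W_n)/2 - min_k W_k given by (1/2)∑_{m=1}^{R} (2/(R-m+2)) e_{-m} + (1/2)∑_{m=1}^{n-R} (2/(n-R-m+2)) e_m where all e_j ∈ [0, M]. Then 0 ≤ (W_0+W_n)/2 - min_k W_k ≤ 2M(1 + log(n+1)). -/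
open Finset

lemma sum_recip_reindex (K : ℕ) :
    ∑ m ∈ Icc 1 K, (1 / ((K:ℝ) - m + 2)) = ∑ i ∈ range K, (1 / ((i:ℝ) + 2)) := by
  refine Finset.sum_nbij' (fun m => K - m) (fun i => K - i) ?_ ?_ ?_ ?_ ?_
  · intro m hm
    simp only [mem_Icc] at hm
    simp only [mem_range]
    omega
  · intro i hi
    simp only [mem_range] at hi
    simp only [mem_Icc]
    omega
  · intro m hm; simp only [mem_Icc] at hm; show K - (K - m) = m; omega
  · intro i hi; simp only [mem_range] at hi; show K - (K - i) = i; omega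
  · intro m hm
    simp only [mem_Icc] at hm
    have : ((K - m : ℕ) : ℝ) = (K : ℝ) - m := by
      push_cast [Nat.cast_sub hm.2]; ring
    rw [this]

lemma aux_sum_bound (n K : ℕ) (hK : K ≤ n) (M : ℝ) (hM : 0 < M) (f : ℕ → ℝ)
    (h0 : ∀ m, 0 ≤ f m) (hMf : ∀ m, f m ≤ M) :
    ∑ m ∈ Icc 1 K, (2 / ((K:ℝ) - m + 2)) * f m ≤ 2 * M * Real.log (n + 1) := by
  have hpos : ∀ m ∈ Icc 1 K, (0:ℝ) < (K:ℝ) - m + 2 := by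
    intro m hm
    simp only [mem_Icc] at hm
    have : (m:ℝ) ≤ K := by exact_mod_cast hm.2
    linarith
  have step1 : ∑ m ∈ Icc 1 K, (2 / ((K:ℝ) - m + 2)) * f m
      ≤ ∑ m ∈ Icc 1 K, 2 * M * (1 / ((K:ℝ) - m + 2)) := by
    refine Finset.sum_le_sum fun m hm => ?_
    have h := hpos m hm
    have : (2 / ((K:ℝ) - m + 2)) * f m ≤ (2 / ((K:ℝ) - m + 2)) * M :=
      mul_le_mul_of_nonneg_left (hMf m) (by positivity)
    calc (2 / ((K:ℝ) - m + 2)) * f m ≤ (2 / ((K:ℝ) - m + 2)) * M := this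
      _ = 2 * M * (1 / ((K:ℝ) - m + 2)) := by ring
  rw [← Finset.mul_sum, sum_recip_reindex] at step1
  have step2 : ∑ i ∈ range K, (1 / ((i:ℝ) + 2)) ≤ Real.log (K + 1) := by
    have h := harmonic_le_one_add_log (K + 1)
    have hcast : ((harmonic (K+1) : ℚ) : ℝ) = ∑ i ∈ range (K+1), ((i:ℝ) + 1)⁻¹ := by
      simp [harmonic]
    rw [hcast, Finset.sum_range_succ'] at h
    simp only [one_div]
    push_cast at h ⊢
    have : ∀ i ∈ range K, ((i:ℝ) + 2)⁻¹ = ((i:ℝ) + 1 + 1)⁻¹ := by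
      intro i _; ring_nf
    rw [Finset.sum_congr rfl this]
    linarith
  have hlog : Real.log (K + 1) ≤ Real.log (n + 1) := by
    apply Real.log_le_log (by positivity)
    have : (K:ℝ) ≤ n := by exact_mod_cast hK
    linarith
  calc ∑ m ∈ Icc 1 K, (2 / ((K:ℝ) - m + 2)) * f m
      ≤ 2 * M * ∑ i ∈ range K, (1 / ((i:ℝ) + 2)) := step1
    _ ≤ 2 * M * Real.log (K + 1) := by nlinarith
    _ ≤ 2 * M * Real.log (n + 1) := by nlinarith

theorem edge_minus_min_bound (n R : ℕ) (hR : R ≤ n) (M : ℝ) (hM : 0 < M)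
    (e : ℤ → ℝ) (he0 : ∀ j : ℤ, 0 ≤ e j) (heM : ∀ j : ℤ, e j ≤ M)
    (W : ℕ → ℝ)
    (hW : (W 0 + W n) / 2 - (Finset.range (n + 1)).inf' (by simp) W =
      (1 / 2) * ∑ m ∈ Finset.Icc 1 R, (2 / ((R : ℝ) - m + 2)) * e (-(m : ℤ)) +
      (1 / 2) * ∑ m ∈ Finset.Icc 1 (n - R), (2 / ((n : ℝ) - R - m + 2)) * e (m : ℤ)) :
    0 ≤ (W 0 + W n) / 2 - (Finset.range (n + 1)).inf' (by simp) W ∧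
    (W 0 + W n) / 2 - (Finset.range (n + 1)).inf' (by simp) W ≤
      2 * M * (1 + Real.log (n + 1)) := by
  have hcast : ∀ m : ℕ, (n : ℝ) - R - m + 2 = ((n - R : ℕ) : ℝ) - m + 2 := by
    intro m; rw [Nat.cast_sub hR]
  have hsum2 : ∑ m ∈ Finset.Icc 1 (n - R), (2 / ((n : ℝ) - R - m + 2)) * e (m : ℤ)
      = ∑ m ∈ Finset.Icc 1 (n - R), (2 / (((n - R : ℕ) : ℝ) - m + 2)) * e (m : ℤ) := by
    exact Finset.sum_congr rfl fun m _ => by rw [hcast]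
  have hpos1 : ∀ m ∈ Finset.Icc 1 R, (0:ℝ) ≤ (2 / ((R : ℝ) - m + 2)) * e (-(m : ℤ)) := by
    intro m hm
    simp only [Finset.mem_Icc] at hm
    have : (m:ℝ) ≤ R := by exact_mod_cast hm.2
    have h2 : (0:ℝ) < (R:ℝ) - m + 2 := by linarith
    exact mul_nonneg (by positivity) (he0 _)
  have hpos2 : ∀ m ∈ Finset.Icc 1 (n - R), (0:ℝ) ≤ (2 / (((n-R:ℕ) : ℝ) - m + 2)) * e (m : ℤ) := by
    intro m hm
    simp only [Finset.mem_Icc] at hm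
    have : (m:ℝ) ≤ (n-R:ℕ) := by exact_mod_cast hm.2
    have h2 : (0:ℝ) < ((n-R:ℕ):ℝ) - m + 2 := by linarith
    exact mul_nonneg (by positivity) (he0 _)
  have b1 := aux_sum_bound n R hR M hM (fun m => e (-(m : ℤ))) (fun m => he0 _) (fun m => heM _)
  have b2 := aux_sum_bound n (n - R) (Nat.sub_le n R) M hM (fun m => e (m : ℤ))
    (fun m => he0 _) (fun m => heM _)
  have hlogpos : 0 ≤ Real.log (n + 1) := by
    apply Real.log_nonneg; have : (0:ℝ) ≤ n := Nat.cast_nonneg n; linarith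
  constructor
  · rw [hW, hsum2]
    have s1 := Finset.sum_nonneg hpos1
    have s2 := Finset.sum_nonneg hpos2
    linarith
  · rw [hW, hsum2]
    nlinarith
end

section
/- Define ψ(t) = -4|t| - 2 log(1-2|t|) for |t| < 1/2 and, for r > 0, ψ(t; r) = ψ(t) - (1/2 + t) log r. Then sup_{t ∈ (-1/2,1/2)} (-ψ(t; r)) equals 2 log(4/(4 - log r)) when 0 < r ≤ 1, and equals log r + 2 log(4/(4 + log r)) when r ≥ 1. -/
/-- The limiting profile `ψ(t) = -4|t| - 2 log(1-2|t|)`. -/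
noncomputable def psi (t : ℝ) : ℝ := -4 * |t| - 2 * Real.log (1 - 2 * |t|)

lemma log_le_tangent {x c : ℝ} (hx : 0 < x) (hc : 0 < c) :
    Real.log x ≤ Real.log c + x / c - 1 := by
  have h := Real.log_le_sub_one_of_pos (div_pos hx hc)
  rw [Real.log_div hx.ne' hc.ne'] at h
  linarith

theorem sup_neg_psi (r : ℝ) (hr : 0 < r) :
    (r ≤ 1 →
      sSup ((fun t => -(psi t - (1 / 2 + t) * Real.log r)) '' Set.Ioo (-(1:ℝ)/2) (1/2)) =
        2 * Real.log (4 / (4 - Real.log r))) ∧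
    (1 ≤ r →
      sSup ((fun t => -(psi t - (1 / 2 + t) * Real.log r)) '' Set.Ioo (-(1:ℝ)/2) (1/2)) =
        Real.log r + 2 * Real.log (4 / (4 + Real.log r))) := by
  set L := Real.log r with hLdef
  constructor
  · intro hr1
    have hL : L ≤ 0 := Real.log_nonpos hr.le hr1
    have hden : (0:ℝ) < 4 - L := by linarith
    have hc : (0:ℝ) < 4 / (4 - L) := by positivity
    apply IsGreatest.csSup_eq
    constructor
    · -- membership: t* = L/(2(4-L))
      refine ⟨L / (2 * (4 - L)), ⟨?_, ?_⟩, ?_⟩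
      · rw [div_lt_div_iff₀ (by norm_num) (by linarith)] at *
        · nlinarith
      · have : L / (2 * (4 - L)) ≤ 0 :=
          div_nonpos_of_nonpos_of_nonneg hL (by linarith)
        linarith [one_half_pos (α := ℝ)]
      · have hts : L / (2 * (4 - L)) ≤ 0 :=
          div_nonpos_of_nonpos_of_nonneg hL (by linarith)
        simp only [psi, abs_of_nonpos hts]
        have h1 : 1 - 2 * -(L / (2 * (4 - L))) = 4 / (4 - L) := by
          field_simp; ring
        rw [h1]
        field_simp
        ring
    · rintro y ⟨t, ⟨ht1, ht2⟩, rfl⟩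
      have habs : |t| < 1 / 2 := abs_lt.2 ⟨by linarith, ht2⟩
      have hx : (0:ℝ) < 1 - 2 * |t| := by linarith
      have htan := log_le_tangent hx hc
      have hdiv : (1 - 2 * |t|) / (4 / (4 - L)) = (1 - 2 * |t|) * (4 - L) / 4 := by
        field_simp
      rw [hdiv] at htan
      have hta : t ≤ |t| := le_abs_self t
      have hta2 : -t ≤ |t| := by linarith [neg_abs_le t]
      have hmul : L * (|t| + t) ≤ 0 :=
        mul_nonpos_of_nonpos_of_nonneg hL (by linarith)
      simp only [psi]
      nlinarith [htan]
  · intro hr1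
    have hL : 0 ≤ L := Real.log_nonneg hr1
    have hden : (0:ℝ) < 4 + L := by linarith
    have hc : (0:ℝ) < 4 / (4 + L) := by positivity
    apply IsGreatest.csSup_eq
    constructor
    · refine ⟨L / (2 * (4 + L)), ⟨?_, ?_⟩, ?_⟩
      · have : 0 ≤ L / (2 * (4 + L)) := div_nonneg hL (by linarith)
        linarith [one_half_pos (α := ℝ)]
      · rw [div_lt_div_iff₀ (by linarith) (by norm_num)]
        nlinarith
      · have hts : 0 ≤ L / (2 * (4 + L)) := div_nonneg hL (by linarith)
        simp only [psi, abs_of_nonneg hts]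
        have h1 : 1 - 2 * (L / (2 * (4 + L))) = 4 / (4 + L) := by
          field_simp; ring
        rw [h1]
        field_simp
        ring
    · rintro y ⟨t, ⟨ht1, ht2⟩, rfl⟩
      have habs : |t| < 1 / 2 := abs_lt.2 ⟨by linarith, ht2⟩
      have hx : (0:ℝ) < 1 - 2 * |t| := by linarith
      have htan := log_le_tangent hx hc
      have hdiv : (1 - 2 * |t|) / (4 / (4 + L)) = (1 - 2 * |t|) * (4 + L) / 4 := by
        field_simp
      rw [hdiv] at htan
      have hta : t ≤ |t| := le_abs_self t
      have hmul : L * (t - |t|) ≤ 0 :=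
        mul_nonpos_of_nonneg_of_nonpos hL (by linarith)
      simp only [psi]
      nlinarith [htan]
end
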